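/- Let tildeL = {(z,α,r) ∈ ℂ×ℝ×ℝ : 0 < r, |z| < r} and E_e = {(z,α,r) ∈ tildeL : |α| < π/2, r = 1/cos α}. Then tildeL ∖ E_e has exactly two connected components, namely U₁ = {(z,α,r) ∈ tildeL : |α| < π/2 and r > 1/cos α} and U₂ = tildeL ∖ I_e where I_e = {(z,α,r) ∈ tildeL : |α| < π/2, r ≥ 1/cos α}; the closure of U₁ in tildeL is I_e, and the boundaries (frontiers in tildeL) of both components equal E_e. -/
import Mathlib


open Real

/-- `tildeL = {(z,α,r) ∈ ℂ×ℝ×ℝ : 0 < r, |z| < r}` (an open subset of `ℂ×ℝ×ℝ`,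
so closures and frontiers within `tildeL` are the ambient ones intersected with `tildeL`). -/
def tL : Set (ℂ × ℝ × ℝ) := {x | 0 < x.2.2 ∧ ‖x.1‖ < x.2.2}

/-- `E_e = {(z,α,r) ∈ tildeL : |α| < π/2, r = 1/cos α}`. -/
noncomputable def Ee : Set (ℂ × ℝ × ℝ) :=
  {x ∈ tL | |x.2.1| < π / 2 ∧ x.2.2 = 1 / Real.cos x.2.1}

/-- `I_e = {(z,α,r) ∈ tildeL : |α| < π/2, r ≥ 1/cos α}`. -/
noncomputable def Ie : Set (ℂ × ℝ × ℝ) :=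
  {x ∈ tL | |x.2.1| < π / 2 ∧ 1 / Real.cos x.2.1 ≤ x.2.2}

/-- `U₁ = {(z,α,r) ∈ tildeL : |α| < π/2 and r > 1/cos α}`. -/
noncomputable def U1 : Set (ℂ × ℝ × ℝ) :=
  {x ∈ tL | |x.2.1| < π / 2 ∧ 1 / Real.cos x.2.1 < x.2.2}

/-- `U₂ = tildeL ∖ I_e`. -/
noncomputable def U2 : Set (ℂ × ℝ × ℝ) := tL \ Ie

/-! ### Auxiliary lemmas -/

lemma myCosPos {α : ℝ} (h : |α| < π / 2) : 0 < Real.cos α :=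
  Real.cos_pos_of_mem_Ioo ⟨(abs_lt.mp h).1, (abs_lt.mp h).2⟩

lemma myHarm {a b u v : ℝ} (ha : 0 ≤ a) (hb : 0 ≤ b) (hab : a + b = 1) (hu : 0 < u)
    (hv : 0 < v) : 1 / (a * u + b * v) ≤ a / u + b / v := by
  have hd : 0 < a * u + b * v := by
    rcases eq_or_lt_of_le ha with h | h
    · have : b = 1 := by linarith
      simp [← h, this, hv]
    · nlinarith [mul_nonneg hb hv.le]
  rw [div_add_div _ _ hu.ne' hv.ne', div_le_div_iff₀ hd (by positivity)]
  have key : (a * v + u * b) * (a * u + b * v) - u * v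
      = a * b * (u - v) ^ 2 + u * v * ((a + b) ^ 2 - 1) := by ring
  rw [hab] at key
  nlinarith [mul_nonneg (mul_nonneg ha hb) (sq_nonneg (u - v))]

lemma myPosComb {a b u v : ℝ} (ha : 0 ≤ a) (hb : 0 ≤ b) (hab : a + b = 1) (hu : 0 < u)
    (hv : 0 < v) : 0 < a * u + b * v := by
  rcases eq_or_lt_of_le ha with h | h
  · have : b = 1 := by linarith
    simp [← h, this, hv]
  · nlinarith [mul_nonneg hb hv.le]

lemma myLtComb {a b u v u' v' : ℝ} (ha : 0 ≤ a) (hb : 0 ≤ b) (hab : a + b = 1)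
    (hu : u < u') (hv : v < v') : a * u + b * v < a * u' + b * v' := by
  rcases eq_or_lt_of_le ha with h | h
  · have hb1 : b = 1 := by linarith
    simp only [← h, hb1, zero_mul, one_mul, zero_add]
    linarith
  · have h1 : a * u < a * u' := by nlinarith
    have h2 : b * v ≤ b * v' := by nlinarith
    linarith

lemma tL_open : IsOpen tL := by
  have h1 : IsOpen {x : ℂ × ℝ × ℝ | 0 < x.2.2} :=
    isOpen_lt continuous_const (continuous_snd.comp continuous_snd)
  have h2 : IsOpen {x : ℂ × ℝ × ℝ | ‖x.1‖ < x.2.2} :=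
    isOpen_lt (continuous_norm.comp continuous_fst) (continuous_snd.comp continuous_snd)
  exact (h1.inter h2)

lemma mem_U1_iff {x : ℂ × ℝ × ℝ} :
    x ∈ U1 ↔ (0 < x.2.2 ∧ ‖x.1‖ < x.2.2) ∧ |x.2.1| < π / 2 ∧ 1 / Real.cos x.2.1 < x.2.2 :=
  Iff.rfl

lemma mem_Ie_iff {x : ℂ × ℝ × ℝ} :
    x ∈ Ie ↔ (0 < x.2.2 ∧ ‖x.1‖ < x.2.2) ∧ |x.2.1| < π / 2 ∧ 1 / Real.cos x.2.1 ≤ x.2.2 :=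
  Iff.rfl

lemma mem_Ee_iff {x : ℂ × ℝ × ℝ} :
    x ∈ Ee ↔ (0 < x.2.2 ∧ ‖x.1‖ < x.2.2) ∧ |x.2.1| < π / 2 ∧ x.2.2 = 1 / Real.cos x.2.1 :=
  Iff.rfl

lemma mem_U2_iff {x : ℂ × ℝ × ℝ} :
    x ∈ U2 ↔ (0 < x.2.2 ∧ ‖x.1‖ < x.2.2) ∧ ¬(|x.2.1| < π / 2 ∧ 1 / Real.cos x.2.1 ≤ x.2.2) := by
  simp only [U2, Set.mem_diff, mem_Ie_iff]
  constructor
  · rintro ⟨h1, h2⟩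
    exact ⟨h1, fun hc => h2 ⟨h1, hc⟩⟩
  · rintro ⟨h1, h2⟩
    exact ⟨h1, fun hc => h2 hc.2⟩

lemma U1_eq_open : U1 = {x : ℂ × ℝ × ℝ |
    ‖x.1‖ < x.2.2 ∧ |x.2.1| < π / 2 ∧ 1 < x.2.2 * Real.cos x.2.1} := by
  ext x
  rw [mem_U1_iff]
  constructor
  · rintro ⟨⟨hr, hz⟩, hα, hs⟩
    exact ⟨hz, hα, (div_lt_iff₀ (myCosPos hα)).mp hs⟩
  · rintro ⟨hz, hα, h1⟩
    have hc := myCosPos hα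
    have hc1 := Real.cos_le_one x.2.1
    have hr : 0 < x.2.2 := by nlinarith
    exact ⟨⟨hr, hz⟩, hα, (div_lt_iff₀ hc).mpr h1⟩

lemma U1_open : IsOpen U1 := by
  rw [U1_eq_open]
  have h1 : IsOpen {x : ℂ × ℝ × ℝ | ‖x.1‖ < x.2.2} :=
    isOpen_lt (continuous_norm.comp continuous_fst) (continuous_snd.comp continuous_snd)
  have h2 : IsOpen {x : ℂ × ℝ × ℝ | |x.2.1| < π / 2} :=
    isOpen_lt (continuous_abs.comp (continuous_fst.comp continuous_snd)) continuous_const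
  have h3 : IsOpen {x : ℂ × ℝ × ℝ | 1 < x.2.2 * Real.cos x.2.1} :=
    isOpen_lt continuous_const ((continuous_snd.comp continuous_snd).mul
      (Real.continuous_cos.comp (continuous_fst.comp continuous_snd)))
  have : {x : ℂ × ℝ × ℝ | ‖x.1‖ < x.2.2 ∧ |x.2.1| < π / 2 ∧ 1 < x.2.2 * Real.cos x.2.1}
      = {x : ℂ × ℝ × ℝ | ‖x.1‖ < x.2.2} ∩ ({x | |x.2.1| < π / 2} ∩
        {x | 1 < x.2.2 * Real.cos x.2.1}) := rfl
  rw [this]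
  exact h1.inter (h2.inter h3)

/-- The closed set whose intersection with `tL` is `Ie`. -/
def Fc : Set (ℂ × ℝ × ℝ) := {x | |x.2.1| ≤ π / 2 ∧ 1 ≤ x.2.2 * Real.cos x.2.1}

lemma Fc_closed : IsClosed Fc := by
  have h1 : IsClosed {x : ℂ × ℝ × ℝ | |x.2.1| ≤ π / 2} :=
    isClosed_le (continuous_abs.comp (continuous_fst.comp continuous_snd)) continuous_const
  have h2 : IsClosed {x : ℂ × ℝ × ℝ | 1 ≤ x.2.2 * Real.cos x.2.1} :=
    isClosed_le continuous_const ((continuous_snd.comp continuous_snd).mul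
      (Real.continuous_cos.comp (continuous_fst.comp continuous_snd)))
  exact h1.inter h2

lemma Ie_eq : Ie = tL ∩ Fc := by
  ext x
  rw [Set.mem_inter_iff, mem_Ie_iff]
  constructor
  · rintro ⟨htL, hα, hs⟩
    exact ⟨htL, hα.le, (div_le_iff₀ (myCosPos hα)).mp hs⟩
  · rintro ⟨htL, ⟨hαle, h1⟩⟩
    have hcnn : 0 ≤ Real.cos x.2.1 :=
      Real.cos_nonneg_of_mem_Icc ⟨(abs_le.mp hαle).1, (abs_le.mp hαle).2⟩
    have hc : 0 < Real.cos x.2.1 := by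
      rcases eq_or_lt_of_le hcnn with h | h
      · exfalso; rw [← h] at h1; simp at h1; linarith
      · exact h
    have hα : |x.2.1| < π / 2 := by
      rcases eq_or_lt_of_le hαle with h | h
      · exfalso
        rcases (abs_eq (by positivity)).mp h with h' | h'
        · rw [h', Real.cos_pi_div_two] at hc; linarith
        · rw [h'] at hc; simp [Real.cos_pi_div_two] at hc
      · exact h
    exact ⟨htL, hα, (div_le_iff₀ hc).mpr h1⟩

lemma U2_eq : U2 = tL ∩ Fcᶜ := by
  rw [U2, Ie_eq]
  ext x
  simp only [Set.mem_diff, Set.mem_inter_iff, Set.mem_compl_iff]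
  tauto

lemma U2_open : IsOpen U2 := by
  rw [U2_eq]; exact tL_open.inter Fc_closed.isOpen_compl

lemma union_eq : U1 ∪ U2 = tL \ Ee := by
  ext x
  simp only [Set.mem_union, mem_U1_iff, mem_U2_iff, Set.mem_diff, mem_Ee_iff]
  constructor
  · rintro (⟨htL, hα, hs⟩ | ⟨htL, h⟩)
    · exact ⟨htL, fun hc => by rw [hc.2.2] at hs; exact lt_irrefl _ hs⟩
    · exact ⟨htL, fun hc => h ⟨hc.2.1, hc.2.2.ge⟩⟩
  · rintro ⟨htL, hne⟩
    by_cases hα : |x.2.1| < π / 2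
    · by_cases hle : 1 / Real.cos x.2.1 ≤ x.2.2
      · left
        refine ⟨htL, hα, lt_of_le_of_ne hle ?_⟩
        intro h
        exact hne ⟨htL, hα, h.symm⟩
      · right
        exact ⟨htL, fun hc => hle hc.2⟩
    · right
      exact ⟨htL, fun hc => hα hc.1⟩

lemma U1_subset_Ie : U1 ⊆ Ie := fun x hx =>
  ⟨hx.1, hx.2.1, hx.2.2.le⟩

lemma disjoint_U1_U2 : Disjoint U1 U2 := by
  rw [Set.disjoint_left]
  intro x hx hx2
  exact hx2.2 (U1_subset_Ie hx)

lemma U1_convex : Convex ℝ U1 := by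
  intro x hx y hy a b ha hb hab
  rw [mem_U1_iff] at hx hy ⊢
  obtain ⟨⟨hxr, hxz⟩, hxα, hxs⟩ := hx
  obtain ⟨⟨hyr, hyz⟩, hyα, hys⟩ := hy
  have hcx := myCosPos hxα
  have hcy := myCosPos hyα
  have hfst : (a • x + b • y).1 = a • x.1 + b • y.1 := rfl
  have hsnd1 : (a • x + b • y).2.1 = a * x.2.1 + b * y.2.1 := rfl
  have hsnd2 : (a • x + b • y).2.2 = a * x.2.2 + b * y.2.2 := rfl
  rw [hfst, hsnd1, hsnd2]
  -- the combined angle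
  have habs : |a * x.2.1 + b * y.2.1| < π / 2 := by
    have h1 : |a * x.2.1 + b * y.2.1| ≤ a * |x.2.1| + b * |y.2.1| := by
      calc |a * x.2.1 + b * y.2.1| ≤ |a * x.2.1| + |b * y.2.1| := abs_add_le _ _
        _ = a * |x.2.1| + b * |y.2.1| := by
            rw [abs_mul, abs_mul, abs_of_nonneg ha, abs_of_nonneg hb]
    have h2 : a * |x.2.1| + b * |y.2.1| < a * (π / 2) + b * (π / 2) :=
      myLtComb ha hb hab hxα hyα
    have h3 : a * (π / 2) + b * (π / 2) = π / 2 := by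
      rw [← add_mul, hab, one_mul]
    linarith
  have hsec : 1 / Real.cos (a * x.2.1 + b * y.2.1) < a * x.2.2 + b * y.2.2 := by
    have hconc : a * Real.cos x.2.1 + b * Real.cos y.2.1
        ≤ Real.cos (a * x.2.1 + b * y.2.1) := by
      have := strictConcaveOn_cos_Icc.concaveOn.2
        (Set.mem_Icc.mpr ⟨(abs_le.mp hxα.le).1, (abs_le.mp hxα.le).2⟩)
        (Set.mem_Icc.mpr ⟨(abs_le.mp hyα.le).1, (abs_le.mp hyα.le).2⟩) ha hb hab
      simpa [smul_eq_mul] using this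
    have hd : 0 < a * Real.cos x.2.1 + b * Real.cos y.2.1 := myPosComb ha hb hab hcx hcy
    calc 1 / Real.cos (a * x.2.1 + b * y.2.1)
        ≤ 1 / (a * Real.cos x.2.1 + b * Real.cos y.2.1) :=
          one_div_le_one_div_of_le hd hconc
      _ ≤ a / Real.cos x.2.1 + b / Real.cos y.2.1 := myHarm ha hb hab hcx hcy
      _ = a * (1 / Real.cos x.2.1) + b * (1 / Real.cos y.2.1) := by
          rw [mul_one_div, mul_one_div]
      _ < a * x.2.2 + b * y.2.2 := myLtComb ha hb hab hxs hys
  have hnorm : ‖a • x.1 + b • y.1‖ < a * x.2.2 + b * y.2.2 := by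
    calc ‖a • x.1 + b • y.1‖ ≤ ‖a • x.1‖ + ‖b • y.1‖ := norm_add_le _ _
      _ = a * ‖x.1‖ + b * ‖y.1‖ := by
          rw [norm_smul, norm_smul, Real.norm_eq_abs, Real.norm_eq_abs,
            abs_of_nonneg ha, abs_of_nonneg hb]
      _ < a * x.2.2 + b * y.2.2 := myLtComb ha hb hab hxz hyz
  have hrpos : 0 < a * x.2.2 + b * y.2.2 := myPosComb ha hb hab hxr hyr
  exact ⟨⟨hrpos, hnorm⟩, habs, hsec⟩

lemma U1_nonempty : U1.Nonempty := by
  refine ⟨((0 : ℂ), (0 : ℝ), (2 : ℝ)), ?_⟩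
  rw [mem_U1_iff]
  refine ⟨⟨by norm_num, by simp⟩, ?_, ?_⟩
  · simp [Real.pi_pos]
  · simp [Real.cos_zero]

lemma U1_isConnected : IsConnected U1 := U1_convex.isConnected U1_nonempty

lemma joinedIn_seg {s : Set (ℂ × ℝ × ℝ)} {a b : ℂ × ℝ × ℝ}
    (h : ∀ t : ℝ, 0 ≤ t → t ≤ 1 → (1 - t) • a + t • b ∈ s) : JoinedIn s a b := by
  refine ⟨⟨⟨fun t => (1 - (t : ℝ)) • a + (t : ℝ) • b, by fun_prop⟩, by simp, by simp⟩,
    fun t => h t t.2.1 t.2.2⟩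

lemma notcond {α r : ℝ} (hr : r ≤ 1 / 2) : ¬(|α| < π / 2 ∧ 1 / Real.cos α ≤ r) := by
  rintro ⟨h1, h2⟩
  have hc := myCosPos h1
  have h3 : (1 : ℝ) ≤ 1 / Real.cos α := by
    rw [le_div_iff₀ hc]
    nlinarith [Real.cos_le_one α]
  linarith

lemma seg_comp (z z' : ℂ) (α α' r r' t : ℝ) :
    (1 - t) • ((z, α, r) : ℂ × ℝ × ℝ) + t • ((z', α', r') : ℂ × ℝ × ℝ)
      = ((1 - t) • z + t • z', (1 - t) * α + t * α', (1 - t) * r + t * r') := rfl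

lemma U2_isPathConnected : IsPathConnected U2 := by
  refine ⟨((0 : ℂ), (0 : ℝ), (1 / 2 : ℝ)), ?_, ?_⟩
  · rw [mem_U2_iff]
    exact ⟨⟨by norm_num, by simp⟩, notcond le_rfl⟩
  · rintro ⟨z, α, r⟩ hy
    rw [mem_U2_iff] at hy
    obtain ⟨⟨hr, hz⟩, hkey⟩ := hy
    set m := min r (1 / 2) with hm
    have hm0 : 0 < m := lt_min hr (by norm_num)
    have hmr : m ≤ r := min_le_left _ _
    have hmhalf : m ≤ 1 / 2 := min_le_right _ _
    -- Step 1 : (z,α,r) → (0,α,r)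
    have J1 : JoinedIn U2 ((z, α, r) : ℂ × ℝ × ℝ) ((0 : ℂ), α, r) := by
      apply joinedIn_seg
      intro t ht0 ht1
      rw [seg_comp, mem_U2_iff]
      have hα : (1 - t) * α + t * α = α := by ring
      have hrr : (1 - t) * r + t * r = r := by ring
      simp only [smul_zero, add_zero, hα, hrr]
      refine ⟨⟨hr, ?_⟩, hkey⟩
      calc ‖(1 - t) • z‖ = |1 - t| * ‖z‖ := by rw [norm_smul, Real.norm_eq_abs]
        _ ≤ 1 * ‖z‖ := by
            apply mul_le_mul_of_nonneg_right _ (norm_nonneg _)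
            rw [abs_of_nonneg (by linarith)]; linarith
        _ = ‖z‖ := one_mul _
        _ < r := hz
    -- Step 2 : (0,α,r) → (0,α,m)
    have J2 : JoinedIn U2 (((0 : ℂ), α, r) : ℂ × ℝ × ℝ) ((0 : ℂ), α, m) := by
      apply joinedIn_seg
      intro t ht0 ht1
      rw [seg_comp, mem_U2_iff]
      have hα : (1 - t) * α + t * α = α := by ring
      simp only [smul_zero, add_zero, hα]
      have hrt0 : 0 < (1 - t) * r + t * m :=
        myPosComb (by linarith) ht0 (by ring) hr hm0
      have hrtr : (1 - t) * r + t * m ≤ r := by nlinarith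
      refine ⟨⟨hrt0, by simpa using hrt0⟩, ?_⟩
      rintro ⟨h1, h2⟩
      exact hkey ⟨h1, h2.trans hrtr⟩
    -- Step 3 : (0,α,m) → (0,0,m)
    have J3 : JoinedIn U2 (((0 : ℂ), α, m) : ℂ × ℝ × ℝ) ((0 : ℂ), (0 : ℝ), m) := by
      apply joinedIn_seg
      intro t ht0 ht1
      rw [seg_comp, mem_U2_iff]
      simp only [smul_zero, add_zero, mul_zero]
      have hmm : (1 - t) * m + t * m = m := by ring
      rw [hmm]
      exact ⟨⟨hm0, by simpa using hm0⟩, notcond hmhalf⟩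
    -- Step 4 : (0,0,m) → (0,0,1/2)
    have J4 : JoinedIn U2 (((0 : ℂ), (0 : ℝ), m) : ℂ × ℝ × ℝ) ((0 : ℂ), (0 : ℝ), 1 / 2) := by
      apply joinedIn_seg
      intro t ht0 ht1
      rw [seg_comp, mem_U2_iff]
      simp only [smul_zero, add_zero, mul_zero, zero_add]
      have hrt0 : 0 < (1 - t) * m + t * (1 / 2) :=
        myPosComb (by linarith) ht0 (by ring) hm0 (by norm_num)
      have hrth : (1 - t) * m + t * (1 / 2) ≤ 1 / 2 := by nlinarith
      exact ⟨⟨hrt0, by simpa using hrt0⟩, notcond hrth⟩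
    exact ((J1.trans (J2.trans (J3.trans J4))).symm)

lemma U2_isConnected : IsConnected U2 := U2_isPathConnected.isConnected

lemma comp_eq {X : Type*} [TopologicalSpace X] {s u v : Set X} (hu : IsOpen u) (hv : IsOpen v)
    (huv : u ∪ v = s) (hd : Disjoint u v) (hcu : IsPreconnected u) {x : X} (hx : x ∈ u) :
    connectedComponentIn s x = u := by
  apply Set.Subset.antisymm
  · intro y hy
    by_contra hyu
    have hC : IsPreconnected (connectedComponentIn s x) := isPreconnected_connectedComponentIn
    have hsub : connectedComponentIn s x ⊆ u ∪ v := by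
      rw [huv]; exact connectedComponentIn_subset s x
    have hne1 : (connectedComponentIn s x ∩ u).Nonempty :=
      ⟨x, mem_connectedComponentIn (huv ▸ Set.mem_union_left v hx), hx⟩
    have hyv : y ∈ v := by
      rcases hsub hy with h | h
      · exact absurd h hyu
      · exact h
    have hne2 : (connectedComponentIn s x ∩ v).Nonempty := ⟨y, hy, hyv⟩
    obtain ⟨w, _, hw⟩ := hC u v hu hv hsub hne1 hne2
    exact Set.disjoint_left.mp hd hw.1 hw.2
  · exact hcu.subset_connectedComponentIn hx (huv ▸ Set.subset_union_left)

lemma components_claim : ∀ x ∈ tL \ Ee,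
    connectedComponentIn (tL \ Ee) x = U1 ∨ connectedComponentIn (tL \ Ee) x = U2 := by
  intro x hx
  rw [← union_eq] at hx
  rcases hx with hx | hx
  · left
    exact comp_eq U1_open U2_open union_eq disjoint_U1_U2 U1_isConnected.isPreconnected hx
  · right
    exact comp_eq (s := tL \ Ee) U2_open U1_open
      (by rw [Set.union_comm]; exact union_eq)
      disjoint_U1_U2.symm U2_isConnected.isPreconnected hx

lemma closure_U1_inter : closure U1 ∩ tL = Ie := by
  apply Set.Subset.antisymm
  · have hsub : U1 ⊆ Fc := by
      intro x hx
      rw [mem_U1_iff] at hx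
      exact ⟨hx.2.1.le, ((div_lt_iff₀ (myCosPos hx.2.1)).mp hx.2.2).le⟩
    have h1 : closure U1 ⊆ Fc := closure_minimal hsub Fc_closed
    rw [Ie_eq]
    intro x hx
    exact ⟨hx.2, h1 hx.1⟩
  · intro x hx
    rw [mem_Ie_iff] at hx
    obtain ⟨⟨hr, hz⟩, hα, hs⟩ := hx
    refine ⟨?_, hr, hz⟩
    have htend : Filter.Tendsto (fun t : ℝ => ((x.1, x.2.1, x.2.2 + t) : ℂ × ℝ × ℝ))
        (nhdsWithin 0 (Set.Ioi 0)) (nhds x) := by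
      have hc : Filter.Tendsto (fun t : ℝ => ((x.1, x.2.1, x.2.2 + t) : ℂ × ℝ × ℝ))
          (nhds 0) (nhds ((x.1, x.2.1, x.2.2 + 0) : ℂ × ℝ × ℝ)) :=
        Continuous.tendsto (by fun_prop) 0
      simp only [add_zero, Prod.mk.eta] at hc
      exact hc.mono_left nhdsWithin_le_nhds
    apply mem_closure_of_tendsto htend
    filter_upwards [self_mem_nhdsWithin] with t ht
    rw [Set.mem_Ioi] at ht
    rw [mem_U1_iff]
    refine ⟨⟨?_, ?_⟩, hα, ?_⟩
    · show 0 < x.2.2 + t; linarith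
    · show ‖x.1‖ < x.2.2 + t; linarith
    · show 1 / Real.cos x.2.1 < x.2.2 + t; linarith

lemma Ie_diff_U1 : Ie \ U1 = Ee := by
  ext x
  simp only [Set.mem_diff, mem_Ie_iff, mem_U1_iff, mem_Ee_iff]
  constructor
  · rintro ⟨⟨htL, hα, hle⟩, hnot⟩
    refine ⟨htL, hα, ?_⟩
    by_contra hne
    exact hnot ⟨htL, hα, lt_of_le_of_ne hle (fun h => hne h.symm)⟩
  · rintro ⟨htL, hα, heq⟩
    exact ⟨⟨htL, hα, heq.ge⟩, fun h => absurd h.2.2 (by rw [heq]; exact lt_irrefl _)⟩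

lemma frontier_U1_inter : frontier U1 ∩ tL = Ee := by
  rw [frontier, U1_open.interior_eq]
  have : (closure U1 \ U1) ∩ tL = (closure U1 ∩ tL) \ U1 := by
    ext x
    simp only [Set.mem_diff, Set.mem_inter_iff]
    tauto
  rw [this, closure_U1_inter, Ie_diff_U1]

lemma Ee_subset_closure_U2 : Ee ⊆ closure U2 := by
  intro x hx
  rw [mem_Ee_iff] at hx
  obtain ⟨⟨hr, hz⟩, hα, heq⟩ := hx
  have htend : Filter.Tendsto (fun t : ℝ => (((1 - t) • x.1, x.2.1, (1 - t) * x.2.2) : ℂ × ℝ × ℝ))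
      (nhdsWithin 0 (Set.Ioi 0)) (nhds x) := by
    have hc : Filter.Tendsto (fun t : ℝ => (((1 - t) • x.1, x.2.1, (1 - t) * x.2.2) : ℂ × ℝ × ℝ))
        (nhds 0) (nhds (((1 - (0:ℝ)) • x.1, x.2.1, (1 - (0:ℝ)) * x.2.2) : ℂ × ℝ × ℝ)) := by
      apply Continuous.tendsto
      fun_prop
    simp only [sub_zero, one_smul, one_mul, Prod.mk.eta] at hc
    exact hc.mono_left nhdsWithin_le_nhds
  apply mem_closure_of_tendsto htend
  filter_upwards [Ioo_mem_nhdsGT_of_mem (Set.mem_Ico.mpr ⟨le_refl (0:ℝ), zero_lt_one⟩)]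
    with t ht
  obtain ⟨ht0, ht1⟩ := ht
  rw [mem_U2_iff]
  have h1t : 0 < 1 - t := by linarith
  refine ⟨⟨?_, ?_⟩, ?_⟩
  · show 0 < (1 - t) * x.2.2
    positivity
  · show ‖(1 - t) • x.1‖ < (1 - t) * x.2.2
    calc ‖(1 - t) • x.1‖ = |1 - t| * ‖x.1‖ := by rw [norm_smul, Real.norm_eq_abs]
      _ = (1 - t) * ‖x.1‖ := by rw [abs_of_pos h1t]
      _ < (1 - t) * x.2.2 := (mul_lt_mul_iff_right₀ h1t).mpr hz
  · show ¬(|x.2.1| < π / 2 ∧ 1 / Real.cos x.2.1 ≤ (1 - t) * x.2.2)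
    rintro ⟨h1, h2⟩
    have htr : 0 < t * x.2.2 := mul_pos ht0 hr
    have h3 : (1 - t) * x.2.2 = x.2.2 - t * x.2.2 := by ring
    linarith [heq, h2, h3, htr]

lemma closure_U2_inter : closure U2 ∩ tL = U2 ∪ Ee := by
  apply Set.Subset.antisymm
  · rintro x ⟨hcl, htL⟩
    have hdis : Disjoint U1 (closure U2) := disjoint_U1_U2.closure_right U1_open
    have hxU1 : x ∉ U1 := fun h => Set.disjoint_left.mp hdis h hcl
    by_cases hEe : x ∈ Ee
    · exact Or.inr hEe
    · have : x ∈ tL \ Ee := ⟨htL, hEe⟩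
      rw [← union_eq] at this
      rcases this with h | h
      · exact absurd h hxU1
      · exact Or.inl h
  · rintro x (hx | hx)
    · exact ⟨subset_closure hx, hx.1⟩
    · exact ⟨Ee_subset_closure_U2 hx, hx.1⟩

lemma Ee_disjoint_U2 : ∀ x ∈ Ee, x ∉ U2 := by
  intro x hx hx2
  rw [mem_Ee_iff] at hx
  rw [mem_U2_iff] at hx2
  exact hx2.2 ⟨hx.2.1, hx.2.2.ge⟩

lemma frontier_U2_inter : frontier U2 ∩ tL = Ee := by
  rw [frontier, U2_open.interior_eq]
  have h1 : (closure U2 \ U2) ∩ tL = (closure U2 ∩ tL) \ U2 := by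
    ext x
    simp only [Set.mem_diff, Set.mem_inter_iff]
    tauto
  rw [h1, closure_U2_inter]
  ext x
  simp only [Set.mem_diff, Set.mem_union]
  constructor
  · rintro ⟨h | h, hn⟩
    · exact absurd h hn
    · exact h
  · intro h
    exact ⟨Or.inr h, Ee_disjoint_U2 x h⟩

theorem stmt14 :
    (U1 ∪ U2 = tL \ Ee) ∧
    Disjoint U1 U2 ∧
    IsConnected U1 ∧
    IsConnected U2 ∧
    (∀ x ∈ tL \ Ee,
      connectedComponentIn (tL \ Ee) x = U1 ∨ connectedComponentIn (tL \ Ee) x = U2) ∧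
    closure U1 ∩ tL = Ie ∧
    frontier U1 ∩ tL = Ee ∧
    frontier U2 ∩ tL = Ee :=
  ⟨union_eq, disjoint_U1_U2, U1_isConnected, U2_isConnected, components_claim,
    closure_U1_inter, frontier_U1_inter, frontier_U2_inter⟩
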